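/- arXiv:1709.01272 — 4 statements merged into one kernel-verified Lean document; each statement's English description precedes it below -/
import Mathlib

section
/- Let λ > 0, T_f > 0, a ≥ 0 and t′ ∈ ℝ. Let g : ℝ → ℝ be continuous with g(s) ≥ 0 for all s, and suppose that for every t ≥ t′ + T_f one has ∫_{t−T_f}^{t} g(s) ds ≥ a. Then for every t ≥ t′ + T_f, ∫_{t′}^{t} e^{−λ(t−s)}·g(s) ds ≥ e^{−λ T_f}·a. -/
/-- Lower bound on the exponentially discounted monitoring signal from a
persistency-of-excitation condition. -/
theorem stmt3 (lam Tf a t' : ℝ) (hlam : 0 < lam) (hTf : 0 < Tf) (ha : 0 ≤ a)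
    (g : ℝ → ℝ) (hg : Continuous g) (hgnn : ∀ s, 0 ≤ g s)
    (hPE : ∀ t ≥ t' + Tf, a ≤ ∫ s in (t - Tf)..t, g s) :
    ∀ t ≥ t' + Tf,
      Real.exp (-lam * Tf) * a ≤ ∫ s in t'..t, Real.exp (-lam * (t - s)) * g s := by
  intro t ht
  have h1 : t' ≤ t - Tf := by linarith
  have h2 : t - Tf ≤ t := by linarith
  have hcont : Continuous (fun s => Real.exp (-lam * (t - s)) * g s) := by
    exact ((Real.continuous_exp.comp (by continuity)).mul hg)
  have hI : ∀ u v : ℝ, IntervalIntegrable (fun s => Real.exp (-lam * (t - s)) * g s)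
      MeasureTheory.volume u v := fun u v => hcont.intervalIntegrable u v
  have hsplit : (∫ s in t'..t, Real.exp (-lam * (t - s)) * g s)
      = (∫ s in t'..(t - Tf), Real.exp (-lam * (t - s)) * g s)
      + ∫ s in (t - Tf)..t, Real.exp (-lam * (t - s)) * g s :=
    (intervalIntegral.integral_add_adjacent_intervals (hI t' (t - Tf)) (hI (t - Tf) t)).symm
  have hnn : 0 ≤ ∫ s in t'..(t - Tf), Real.exp (-lam * (t - s)) * g s := by
    apply intervalIntegral.integral_nonneg h1
    intro s _
    exact mul_nonneg (Real.exp_pos _).le (hgnn s)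
  have hmain : Real.exp (-lam * Tf) * a ≤ ∫ s in (t - Tf)..t, Real.exp (-lam * (t - s)) * g s := by
    have hle : Real.exp (-lam * Tf) * a
        ≤ Real.exp (-lam * Tf) * ∫ s in (t - Tf)..t, g s :=
      mul_le_mul_of_nonneg_left (hPE t ht) (Real.exp_pos _).le
    refine hle.trans ?_
    rw [← intervalIntegral.integral_const_mul]
    apply intervalIntegral.integral_mono_on h2 (by
      exact (continuous_const.mul hg).intervalIntegrable _ _) (hI _ _)
    intro s hs
    have h3 : -lam * Tf ≤ -lam * (t - s) := by nlinarith [hs.1, hs.2]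
    exact mul_le_mul_of_nonneg_right (Real.exp_le_exp.mpr h3) (hgnn s)
  linarith
end

section
/- Let I be a finite nonempty index set, let d : I → [0,∞) and μ : I → [0,∞) be functions, let ε ≥ 0, let α : [0,∞) → [0,∞) be a strictly monotone increasing bijection with inverse α⁻¹, and let ᾱ : [0,∞) → [0,∞) be monotone nondecreasing. Suppose that for every i ∈ I, α(d(i)) ≤ μ(i) ≤ ε + ᾱ(d(i)). Then every σ ∈ I that minimises μ over I satisfies d(σ) ≤ α⁻¹(ε + ᾱ(min_{i∈I} d(i))). -/
/-- Core selection argument: if each monitoring value is sandwiched as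
`α(d i) ≤ μ i ≤ ε + ᾱ(d i)`, then any minimiser `σ` of `μ` satisfies
`d σ ≤ α⁻¹(ε + ᾱ(min_i d i))`. -/
theorem stmt7 {I : Type*} [Fintype I] [Nonempty I]
    (d μ : I → ℝ) (hd : ∀ i, 0 ≤ d i) (hμ : ∀ i, 0 ≤ μ i)
    (ε : ℝ) (hε : 0 ≤ ε)
    (α αinv : ℝ → ℝ)
    (hα : StrictMonoOn α (Set.Ici 0))
    (hbij : Set.BijOn α (Set.Ici 0) (Set.Ici 0))
    (hinv : Set.InvOn αinv α (Set.Ici 0) (Set.Ici 0))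
    (αbar : ℝ → ℝ) (hαbar : MonotoneOn αbar (Set.Ici 0))
    (hsand : ∀ i, α (d i) ≤ μ i ∧ μ i ≤ ε + αbar (d i))
    (σ : I) (hσ : ∀ i, μ σ ≤ μ i) :
    d σ ≤ αinv (ε + αbar (Finset.univ.inf' Finset.univ_nonempty d)) := by
  obtain ⟨j, _, hj⟩ := Finset.exists_mem_eq_inf' Finset.univ_nonempty d
  rw [hj]
  set c := ε + αbar (d j) with hc
  have hchain : α (d σ) ≤ c := le_trans (hsand σ).1 (le_trans (hσ j) (hsand j).2)
  have hdm : d σ ∈ Set.Ici (0:ℝ) := hd σ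
  have hcm : c ∈ Set.Ici (0:ℝ) := le_trans (hbij.mapsTo hdm) hchain
  obtain ⟨x, hx, hxc⟩ := hbij.surjOn hcm
  have hαx : αinv c = x := by rw [← hxc, hinv.1 hx]
  by_contra h
  push_neg at h
  have : α (αinv c) < α (d σ) := hα (hαx ▸ hx) hdm h
  rw [hinv.2 hcm] at this
  exact absurd hchain (not_le.mpr this)
end

section
/- Let I be a finite nonempty index set, μ : I → ℝ and d : I → ℝ functions with d(j) > 0 for all j ∈ I, and let μ̂ ∈ ℝ and ε > 0. Let D = max_{j∈I} d(j), and let i ∈ I satisfy d(i) = D and μ(i) ≤ μ(j) for every j ∈ I with d(j) = D. Then there exists L > 0 such that: (a) μ(i) − L·d(i) ≤ μ(j) − L·d(j) for all j ∈ I, and (b) μ(i) − L·d(i) ≤ μ̂ − ε·|μ̂|. -/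
/-- Among the hyperrectangles of largest size, the one with the smallest monitoring value is
potentially optimal. -/
theorem stmt8 {I : Type*} [Fintype I] [Nonempty I]
    (μ d : I → ℝ) (hd : ∀ j, 0 < d j) (μhat ε : ℝ) (hε : 0 < ε)
    (D : ℝ) (hD : D = Finset.univ.sup' Finset.univ_nonempty d)
    (i : I) (hdi : d i = D) (hμi : ∀ j, d j = D → μ i ≤ μ j) :
    ∃ L > 0, (∀ j, μ i - L * d i ≤ μ j - L * d j) ∧ μ i - L * d i ≤ μhat - ε * |μhat| := by
  have hDpos : 0 < D := hdi ▸ hd i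
  set c : I → ℝ := fun j => (μ i - μ j) / (D - d j) with hc
  set L : ℝ := max (max 1 ((μ i - μhat + ε * |μhat|) / D))
      (Finset.univ.sup' Finset.univ_nonempty c) with hL
  have hL1 : (1 : ℝ) ≤ L := le_trans (le_max_left _ _) (le_max_left _ _)
  have hLpos : 0 < L := lt_of_lt_of_le one_pos hL1
  refine ⟨L, hLpos, ?_, ?_⟩
  · intro j
    have hdj : d j ≤ D := hD ▸ Finset.le_sup' d (Finset.mem_univ j)
    rcases eq_or_lt_of_le hdj with heq | hlt
    · have := hμi j heq
      rw [hdi, heq]; linarith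
    · have hcL : c j ≤ L :=
        le_trans (Finset.le_sup' c (Finset.mem_univ j)) (le_max_right _ _)
      have hpos : 0 < D - d j := by linarith
      have : μ i - μ j ≤ L * (D - d j) := by
        rw [hc] at hcL
        have := (div_le_iff₀ hpos).mp hcL
        linarith
      rw [hdi]; linarith
  · have hLe : (μ i - μhat + ε * |μhat|) / D ≤ L :=
      le_trans (le_max_right _ _) (le_max_left _ _)
    have := (div_le_iff₀ hDpos).mp hLe
    rw [hdi]; linarith
end

section
/- Let I be a finite nonempty index set and let d : I → [0,∞). Let λ > 0, β > 0, T_f > 0, K ≥ 0 be constants, let α : [0,∞) → [0,∞) be a strictly monotone increasing bijection with inverse α⁻¹, and let ᾱ : [0,∞) → [0,∞) be monotone nondecreasing. For each i ∈ I let g_i : ℝ → ℝ be continuous with g_i ≥ 0, and suppose: (i) for all t ≥ T_f, ∫_{t−T_f}^{t} g_i(s) ds ≥ α(d(i)); and (ii) for all s ≥ 0, g_i(s) ≤ K·e^{−β s} + ᾱ(d(i)). Define μ_i(t) = ∫_{0}^{t} e^{−λ(t−s)}·g_i(s) ds, and for each t let σ(t) ∈ I be any index minimising i ↦ μ_i(t)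 over I. Then for every η > 0 there exists T★ > 0 such that for all t ≥ T★, d(σ(t)) ≤ α⁻¹( 2·e^{λ T_f}·ᾱ( min_{i∈I} d(i) ) / λ ) + η. -/
/-!
For `t ≥ Tf` the forgetting factor is at least `exp (-lam * Tf)` on the last excitation window,
so `μ i t ≥ exp (-lam * Tf) * α (d i)` for every observer. For the best sample `i₀`, integrating
the upper bound gives `μ i₀ t ≤ ᾱ (d i₀) / lam` plus a transient `O (t * exp (-min β lam * t))`.
Minimality of `μ (σ t) t` chains the two, so `α (d (σ t))` eventually lies below
`exp (lam * Tf) * ᾱ (d i₀) / lam + ε` for any `ε > 0`, and strict monotonicity of `α` turns this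
into the claim.
-/

open Real Set Filter Topology intervalIntegral

noncomputable def discountedIntegral (lam : ℝ) (g : ℝ → ℝ) (t : ℝ) : ℝ :=
  ∫ s in (0:ℝ)..t, exp (-lam * (t - s)) * g s

section discountedIntegral

variable {g : ℝ → ℝ} {lam t : ℝ}

lemma integral_exp_neg_mul_sub (hlam : lam ≠ 0) :
    ∫ s in (0:ℝ)..t, exp (-lam * (t - s)) = (1 - exp (-lam * t)) / lam := by
  have h : ∀ s, -lam * (t - s) = lam * s + -lam * t := fun s => by ring
  simp only [h]
  rw [integral_comp_mul_add (f := exp) hlam, integral_exp]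
  simp only [mul_zero, zero_add, smul_eq_mul]
  rw [show lam * t + -lam * t = 0 by ring, exp_zero]
  field_simp

lemma integral_exp_neg_mul_sub_le (hlam : 0 < lam) :
    ∫ s in (0:ℝ)..t, exp (-lam * (t - s)) ≤ 1 / lam := by
  rw [integral_exp_neg_mul_sub hlam.ne']
  gcongr
  linarith [exp_pos (-lam * t)]

lemma intervalIntegrable_exp_neg_mul_sub_mul (hg : Continuous g) (a b : ℝ) :
    IntervalIntegrable (fun s => exp (-lam * (t - s)) * g s) MeasureTheory.volume a b :=
  (by fun_prop : Continuous fun s => exp (-lam * (t - s)) * g s).intervalIntegrable a b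

lemma integral_le_exp_mul_discountedIntegral (hg : Continuous g) (hg0 : ∀ s, 0 ≤ g s)
    (hlam : 0 ≤ lam) {T : ℝ} (hT : 0 ≤ T) (hTt : T ≤ t) :
    ∫ s in (t - T)..t, g s ≤ exp (lam * T) * discountedIntegral lam g t := by
  have hhead : 0 ≤ ∫ s in (0:ℝ)..(t - T), exp (-lam * (t - s)) * g s :=
    integral_nonneg (by linarith) fun s _ => mul_nonneg (exp_pos _).le (hg0 s)
  have hwindow : ∫ s in (t - T)..t, exp (-(lam * T)) * g s
      ≤ ∫ s in (t - T)..t, exp (-lam * (t - s)) * g s := by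
    refine integral_mono_on (by linarith) ((hg.const_mul _).intervalIntegrable _ _)
      (intervalIntegrable_exp_neg_mul_sub_mul hg _ _) fun s hs => ?_
    exact mul_le_mul_of_nonneg_right (exp_le_exp.mpr (by nlinarith [hs.1])) (hg0 s)
  have hsplit := integral_add_adjacent_intervals
    (intervalIntegrable_exp_neg_mul_sub_mul (lam := lam) (t := t) hg 0 (t - T))
    (intervalIntegrable_exp_neg_mul_sub_mul hg (t - T) t)
  rw [integral_const_mul] at hwindow
  calc ∫ s in (t - T)..t, g s = exp (lam * T) * (exp (-(lam * T)) * ∫ s in (t - T)..t, g s) := by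
        rw [← mul_assoc, ← exp_add, add_neg_cancel, exp_zero, one_mul]
    _ ≤ exp (lam * T) * discountedIntegral lam g t := by
        rw [discountedIntegral, ← hsplit]; gcongr; linarith

lemma discountedIntegral_le_of_le_exp_add (hg : Continuous g) {β K A : ℝ}
    (hub : ∀ s ≥ 0, g s ≤ K * exp (-β * s) + A) (hlam : 0 < lam) (hK : 0 ≤ K) (hA : 0 ≤ A)
    (ht : 0 ≤ t) :
    discountedIntegral lam g t ≤ A / lam + K * (t * exp (-min β lam * t)) := by
  have hpt : ∀ s ∈ Icc 0 t, exp (-lam * (t - s)) * g s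
      ≤ K * exp (-min β lam * t) + A * exp (-lam * (t - s)) := by
    rintro s ⟨hs0, hst⟩
    have hrate : -lam * (t - s) + -β * s ≤ -min β lam * t := by
      nlinarith [min_le_left β lam, min_le_right β lam]
    calc exp (-lam * (t - s)) * g s
        ≤ exp (-lam * (t - s)) * (K * exp (-β * s) + A) := by gcongr; exact hub s hs0
      _ = K * exp (-lam * (t - s) + -β * s) + A * exp (-lam * (t - s)) := by
        rw [exp_add]; ring
      _ ≤ K * exp (-min β lam * t) + A * exp (-lam * (t - s)) := by gcongr
  calc discountedIntegral lam g t
      ≤ ∫ s in (0:ℝ)..t, (K * exp (-min β lam * t) + A * exp (-lam * (t - s))) :=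
        integral_mono_on ht (intervalIntegrable_exp_neg_mul_sub_mul hg _ _)
          ((by fun_prop : Continuous fun s =>
            K * exp (-min β lam * t) + A * exp (-lam * (t - s))).intervalIntegrable _ _) hpt
    _ = t * (K * exp (-min β lam * t)) + A * ∫ s in (0:ℝ)..t, exp (-lam * (t - s)) := by
        rw [integral_add intervalIntegrable_const
          ((by fun_prop : Continuous fun s => A * exp (-lam * (t - s))).intervalIntegrable _ _),
          integral_const, integral_const_mul, smul_eq_mul, sub_zero]
    _ ≤ t * (K * exp (-min β lam * t)) + A * (1 / lam) := by
        gcongr; exact integral_exp_neg_mul_sub_le hlam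
    _ = A / lam + K * (t * exp (-min β lam * t)) := by ring

end discountedIntegral

lemma StrictMonoOn.exists_pos_forall_le_add_of_le_add {α αinv : ℝ → ℝ}
    (hα : StrictMonoOn α (Ici 0)) (hsurj : SurjOn α (Ici 0) (Ici 0))
    (hinv : LeftInvOn αinv α (Ici 0)) {c η : ℝ} (hc : 0 ≤ c) (hη : 0 < η) :
    ∃ ε > 0, ∀ x ≥ 0, α x ≤ c + ε → x ≤ αinv c + η := by
  obtain ⟨ζ, hζ0, rfl⟩ := hsurj (mem_Ici.mpr hc)
  have hζη : ζ + η ∈ Ici (0:ℝ) := mem_Ici.mpr (by linarith [mem_Ici.mp hζ0])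
  refine ⟨α (ζ + η) - α ζ, sub_pos.mpr (hα hζ0 hζη (by linarith)), fun x hx hαx => ?_⟩
  rw [hinv hζ0]
  exact (hα.le_iff_le hx hζη).mp (by linarith)

theorem stmt11_general {I : Type*} [Fintype I] [Nonempty I]
    (d : I → ℝ) (hd : ∀ i, 0 ≤ d i)
    (lam β Tf K : ℝ) (hlam : 0 < lam) (hβ : 0 < β) (hTf : 0 < Tf) (hK : 0 ≤ K)
    (α αinv : ℝ → ℝ)
    (hα : StrictMonoOn α (Set.Ici 0))
    (hbij : Set.BijOn α (Set.Ici 0) (Set.Ici 0))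
    (hinv : Set.InvOn αinv α (Set.Ici 0) (Set.Ici 0))
    (αbar : ℝ → ℝ)
    (hαbarnn : ∀ r ≥ (0:ℝ), 0 ≤ αbar r)
    (g : I → ℝ → ℝ) (hgcont : ∀ i, Continuous (g i)) (hgnn : ∀ i s, 0 ≤ g i s)
    (hPE : ∀ i, ∀ t ≥ Tf, α (d i) ≤ ∫ s in (t - Tf)..t, g i s)
    (hub : ∀ i, ∀ s ≥ (0:ℝ), g i s ≤ K * Real.exp (-β * s) + αbar (d i))
    (μ : I → ℝ → ℝ)
    (hμ : ∀ i t, μ i t = ∫ s in (0:ℝ)..t, Real.exp (-lam * (t - s)) * g i s)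
    (σ : ℝ → I) (hσ : ∀ t i, μ (σ t) t ≤ μ i t) :
    ∀ η > 0, ∃ Tstar > 0, ∀ t ≥ Tstar,
      d (σ t) ≤
        αinv (2 * Real.exp (lam * Tf) *
          αbar (Finset.univ.inf' Finset.univ_nonempty d) / lam) + η := by
  intro η hη
  obtain ⟨i₀, -, hi₀⟩ := Finset.exists_mem_eq_inf' Finset.univ_nonempty d
  rw [hi₀]
  have hA : 0 ≤ αbar (d i₀) := hαbarnn _ (hd i₀)
  obtain ⟨ε, hε, hmargin⟩ := hα.exists_pos_forall_le_add_of_le_add hbij.surjOn hinv.1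
    (c := 2 * exp (lam * Tf) * αbar (d i₀) / lam) (by positivity) hη
  have htransient : Tendsto (fun t => exp (lam * Tf) * (K * (t * exp (-min β lam * t))))
      atTop (𝓝 0) := by
    simpa using ((tendsto_rpow_mul_exp_neg_mul_atTop_nhds_zero 1 _
      (lt_min hβ hlam)).const_mul K).const_mul (exp (lam * Tf))
  obtain ⟨T, hT⟩ := eventually_atTop.1
    ((htransient.eventually_lt_const hε).and (eventually_ge_atTop Tf))
  refine ⟨max T 1, by positivity, fun t ht => hmargin _ (hd _) ?_⟩
  obtain ⟨hsmall, hTft⟩ := hT t (le_of_max_le_left ht)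
  have hμσ : μ (σ t) t ≤ αbar (d i₀) / lam + K * (t * exp (-min β lam * t)) :=
    (hσ t i₀).trans <| (hμ i₀ t).trans_le <|
      discountedIntegral_le_of_le_exp_add (hgcont i₀) (hub i₀) hlam hK hA (by linarith)
  calc α (d (σ t)) ≤ exp (lam * Tf) * μ (σ t) t := by
        rw [hμ]
        exact (hPE _ t hTft).trans
          (integral_le_exp_mul_discountedIntegral (hgcont _) (hgnn _) hlam.le hTf.le hTft)
    _ ≤ exp (lam * Tf) * (αbar (d i₀) / lam + K * (t * exp (-min β lam * t))) := by gcongr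
    _ = exp (lam * Tf) * αbar (d i₀) / lam
          + exp (lam * Tf) * (K * (t * exp (-min β lam * t))) := by ring
    _ ≤ 2 * exp (lam * Tf) * αbar (d i₀) / lam + ε := by
        have hdouble : 2 * exp (lam * Tf) * αbar (d i₀) / lam
            = exp (lam * Tf) * αbar (d i₀) / lam + exp (lam * Tf) * αbar (d i₀) / lam := by ring
        have : 0 ≤ exp (lam * Tf) * αbar (d i₀) / lam := by positivity
        linarith

/-- Fixed-bank version of Theorem 1 (parameter estimation part) of the supervisory observer:
under persistency-of-excitation lower bounds and transient-plus-mismatch upper bounds on the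
squared output errors, the sample selected by minimising the monitoring signal is eventually
as good as the best sample in the bank, up to a class-K∞ margin. -/
theorem stmt11 {I : Type*} [Fintype I] [Nonempty I]
    (d : I → ℝ) (hd : ∀ i, 0 ≤ d i)
    (lam β Tf K : ℝ) (hlam : 0 < lam) (hβ : 0 < β) (hTf : 0 < Tf) (hK : 0 ≤ K)
    (α αinv : ℝ → ℝ)
    (hα : StrictMonoOn α (Set.Ici 0))
    (hbij : Set.BijOn α (Set.Ici 0) (Set.Ici 0))
    (hinv : Set.InvOn αinv α (Set.Ici 0) (Set.Ici 0))
    (αbar : ℝ → ℝ) (hαbar : MonotoneOn αbar (Set.Ici 0))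
    (hαbarnn : ∀ r ≥ (0:ℝ), 0 ≤ αbar r)
    (g : I → ℝ → ℝ) (hgcont : ∀ i, Continuous (g i)) (hgnn : ∀ i s, 0 ≤ g i s)
    (hPE : ∀ i, ∀ t ≥ Tf, α (d i) ≤ ∫ s in (t - Tf)..t, g i s)
    (hub : ∀ i, ∀ s ≥ (0:ℝ), g i s ≤ K * Real.exp (-β * s) + αbar (d i))
    (μ : I → ℝ → ℝ)
    (hμ : ∀ i t, μ i t = ∫ s in (0:ℝ)..t, Real.exp (-lam * (t - s)) * g i s)
    (σ : ℝ → I) (hσ : ∀ t i, μ (σ t) t ≤ μ i t) :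
    ∀ η > 0, ∃ Tstar > 0, ∀ t ≥ Tstar,
      d (σ t) ≤
        αinv (2 * Real.exp (lam * Tf) *
          αbar (Finset.univ.inf' Finset.univ_nonempty d) / lam) + η :=
  stmt11_general d hd lam β Tf K hlam hβ hTf hK α αinv hα hbij hinv αbar hαbarnn g hgcont hgnn hPE
    hub μ hμ σ hσ
end
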